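/- arXiv:2202.10738 — 9 statements merged into one kernel-verified Lean document; each statement's English description precedes it below -/
import Mathlib

section
/- Define finite tails x_{n,k} = a_{n+1}/(b_{n+1} + a_{n+2}/(b_{n+2} + ⋯ + a_{n+k}/b_{n+k})) for the semi-regular setting. Then for all n ≥ 0 and k ≥ 1: if a_{n+1} = 1 then 0 < x_{n,k} ≤ 1, and if a_{n+1} = -1 then -1 ≤ x_{n,k} < 0. -/
lemma srcf_aux (v D : ℝ) (hD : 1 ≤ D) (h : v = 1 / D ∨ v = -1 / D) :
    ((v = 1 / D) → 0 < v ∧ v ≤ 1) ∧ ((v = -1 / D) → -1 ≤ v ∧ v < 0) := by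
  have hDpos : 0 < D := by linarith
  have h1 : 0 < 1 / D := by positivity
  have h2 : 1 / D ≤ 1 := by rw [div_le_one hDpos]; exact hD
  constructor
  · intro hv; rw [hv]; exact ⟨h1, h2⟩
  · intro hv; rw [hv, neg_div]; constructor <;> linarith

theorem srcf_tail_bounds (a b : ℤ → ℤ) (x : ℤ → ℕ → ℝ)
    (ha : ∀ n : ℤ, 1 ≤ n → a n = 1 ∨ a n = -1)
    (hb : ∀ n : ℤ, 1 ≤ n → 1 ≤ b n)
    (hba : ∀ n : ℤ, 1 ≤ n → 1 ≤ b n + a (n + 1))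
    (hx1 : ∀ n : ℤ, 0 ≤ n → x n 1 = (a (n + 1) : ℝ) / (b (n + 1) : ℝ))
    (hxr : ∀ n : ℤ, 0 ≤ n → ∀ k : ℕ, 1 ≤ k →
      x n (k + 1) = (a (n + 1) : ℝ) / ((b (n + 1) : ℝ) + x (n + 1) k)) :
    ∀ n : ℤ, 0 ≤ n → ∀ k : ℕ, 1 ≤ k →
      (a (n + 1) = 1 → 0 < x n k ∧ x n k ≤ 1) ∧
      (a (n + 1) = -1 → -1 ≤ x n k ∧ x n k < 0) := by
  have main : ∀ k : ℕ, 1 ≤ k → ∀ n : ℤ, 0 ≤ n →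
      (a (n + 1) = 1 → 0 < x n k ∧ x n k ≤ 1) ∧
      (a (n + 1) = -1 → -1 ≤ x n k ∧ x n k < 0) := by
    intro k hk
    induction k, hk using Nat.le_induction with
    | base =>
      intro n hn
      have hb1 : (1:ℝ) ≤ (b (n+1) : ℝ) := by exact_mod_cast hb (n+1) (by omega)
      rw [hx1 n hn]
      constructor
      · intro h; rw [h]; push_cast
        exact (srcf_aux _ _ hb1 (Or.inl rfl)).1 rfl
      · intro h; rw [h]; push_cast
        exact (srcf_aux _ _ hb1 (Or.inr rfl)).2 rfl
    | succ k hk1 IH =>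
      intro n hn
      have IH' := IH (n+1) (by omega)
      have e : n + 1 + 1 = n + 2 := by ring
      rw [e] at IH'
      have ha2 := ha (n+2) (by omega)
      have hb1 : (1:ℝ) ≤ (b (n+1) : ℝ) := by exact_mod_cast hb (n+1) (by omega)
      have hD : 1 ≤ (b (n+1) : ℝ) + x (n+1) k := by
        rcases ha2 with h2 | h2
        · have := (IH'.1 h2).1; linarith
        · have hba' : (2:ℤ) ≤ b (n+1) := by
            have h3 := hba (n+1) (by omega); rw [e, h2] at h3; omega
          have hb2 : (2:ℝ) ≤ (b (n+1) : ℝ) := by exact_mod_cast hba'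
          have := (IH'.2 h2).1; linarith
      rw [hxr n hn k hk1]
      constructor
      · intro h; rw [h]; push_cast
        exact (srcf_aux _ _ hD (Or.inl rfl)).1 rfl
      · intro h; rw [h]; push_cast
        exact (srcf_aux _ _ hD (Or.inr rfl)).2 rfl
  intro n hn k hk; exact main k hk n hn
end

section
/- Let α ∈ ℝ, and suppose p_n ∈ ℤ, q_n ∈ ℤ_{>0} are coprime for all n ≥ 0 with q_n → ∞. Assume there exist positive constants ρ, σ, τ such that q_{n+1} ≥ ρ q_n and σ/(q_n q_{n+1}) ≤ |α - p_n/q_n| ≤ τ/(q_n q_{n+1}) for all large n. Then α is irrational and its irrationality exponent equals 1 + limsup_{n→∞} (log q_{n+1})/(log q_n). -/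
noncomputable def irrationalityExponent (α : ℝ) : EReal :=
  sSup {x : EReal | ∃ μ : ℝ, x = (μ : EReal) ∧
    {r : ℚ | |α - (r : ℝ)| < (r.den : ℝ) ^ (-μ)}.Infinite}

/-!
Write `ε_n = |α - p_n/q_n|`, so that `ε_n ≍ 1/(q_n q_{n+1})`. If `q_{n+1} > q_n^c` infinitely
often, then `ε_n < q_n^{-(1+c)}` (up to the constant `τ`) for those `n`, and the convergents
alone are approximations of order `1 + c`.

Conversely, suppose `q_{n+1} < q_n^c` for all large `n`, and let `a/b` be a rational with `b`
large. Choose `n` with `q_n < 2τb ≤ q_{n+1}`. If `a/b = p_n/q_n`, the lower bound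
`ε_n ≥ σ/(q_n q_{n+1}) > σ q_n^{-(1+c)}` forbids approximation of order `μ > 1 + c`. Otherwise
`|a/b - p_n/q_n| ≥ 1/(b q_n)` while `ε_n ≤ 1/(2b q_n)`, so `|α - a/b| ≥ 1/(2b q_n) > 1/(4τb²)`,
which forbids order `μ > 2`. The growth condition `q_{n+1} ≥ ρ q_n` makes the limsup at least `1`,
so every `μ` above `1 + limsup` exceeds `2`.

The same separation `|x - p_n/q_n| ≥ 1/(x.den · q_n)` with `ε_n ≤ τ/(q_n q_{n+1})` and
`q_{n+1} → ∞` shows that `α` is not a rational `x`.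
-/

open Filter Real Topology

namespace Rat

theorem one_div_den_mul_den_le_abs_sub {x y : ℚ} (h : x ≠ y) :
    1 / ((x.den : ℝ) * y.den) ≤ |(x : ℝ) - y| := by
  have hnum : (x - y) * (x.den * y.den) = ((x.num * y.den - y.num * x.den : ℤ) : ℚ) := by
    push_cast
    rw [sub_mul, ← mul_assoc, Rat.mul_den_eq_num, mul_left_comm, Rat.mul_den_eq_num]
    ring
  have hne : x.num * y.den - y.num * x.den ≠ 0 := by
    intro h0
    rw [h0, Int.cast_zero, mul_eq_zero] at hnum
    exact h (sub_eq_zero.1 (hnum.resolve_right (by positivity)))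
  have hone : (1 : ℚ) ≤ |x - y| * (x.den * y.den) := by
    rw [← abs_of_pos (by positivity : (0 : ℚ) < x.den * y.den), ← abs_mul, hnum, ← Int.cast_abs]
    exact_mod_cast Int.one_le_abs hne
  rw [div_le_iff₀ (by positivity)]
  exact_mod_cast hone

theorem den_intCast_div_intCast {a b : ℤ} (hb : 0 < b) (h : IsCoprime a b) :
    ((a / b : ℚ).den : ℝ) = b := by
  have : ((a / b : ℚ).den : ℤ) = b := by
    apply Rat.den_div_eq_of_coprime hb
    rwa [Nat.Coprime, ← Int.gcd, ← Int.isCoprime_iff_gcd_eq_one]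
  exact_mod_cast this

theorem finite_setOf_abs_le_den_le (M : ℝ) (B : ℕ) :
    {r : ℚ | |(r : ℝ)| ≤ M ∧ r.den ≤ B}.Finite := by
  set K : ℤ := ⌈M * B⌉
  refine ((Set.finite_Icc (-K) K).prod (Set.finite_Iic B)).image (fun z => (z.1 / z.2 : ℚ))
    |>.subset ?_
  rintro r ⟨hr, hden⟩
  refine ⟨(r.num, r.den), ⟨abs_le.1 ?_, hden⟩, Rat.num_div_den r⟩
  have hnum : (r.num : ℝ) = r * r.den := by exact_mod_cast (Rat.mul_den_eq_num r).symm
  have : (|r.num| : ℝ) ≤ M * B := by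
    rw [hnum, abs_mul, Nat.abs_cast]
    exact mul_le_mul hr (by exact_mod_cast hden) (by positivity) ((abs_nonneg _).trans hr)
  exact_mod_cast this.trans (Int.le_ceil _)

end Rat

theorem one_div_two_mul_le_abs_sub_of_ne {α : ℝ} {r y : ℚ} (hne : r ≠ y)
    (hy : |α - y| ≤ 1 / (2 * r.den * y.den)) : 1 / (2 * r.den * y.den) ≤ |α - r| := by
  have hsep := Rat.one_div_den_mul_den_le_abs_sub hne
  have htri : |(r : ℝ) - y| ≤ |α - r| + |α - y| := abs_sub_comm (r : ℝ) α ▸ abs_sub_le _ α _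
  have : 1 / ((r.den : ℝ) * y.den) = 2 * (1 / (2 * r.den * y.den)) := by field_simp
  linarith

section RpowEstimates

variable {Q Q' b σ τ c μ : ℝ}

theorem rpow_sub_div_mul_rpow (hQ : 0 < Q) : Q ^ (c - (μ - 1)) / (Q * Q ^ c) = Q ^ (-μ) := by
  rw [mul_comm, ← rpow_add_one hQ.ne', ← rpow_sub hQ]
  ring_nf

theorem div_mul_lt_rpow_neg (hQ : 0 < Q) (hτ : 0 < τ) (hQ' : Q ^ c < Q')
    (hτQ : τ ≤ Q ^ (c - (μ - 1))) : τ / (Q * Q') < Q ^ (-μ) :=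
  calc τ / (Q * Q') < τ / (Q * Q ^ c) :=
        div_lt_div_of_pos_left hτ (by positivity) (mul_lt_mul_of_pos_left hQ' hQ)
    _ ≤ Q ^ (c - (μ - 1)) / (Q * Q ^ c) := div_le_div_of_nonneg_right hτQ (by positivity)
    _ = Q ^ (-μ) := rpow_sub_div_mul_rpow hQ

theorem rpow_neg_lt_div_mul (hQ : 0 < Q) (hQ'pos : 0 < Q') (hQ' : Q' < Q ^ c)
    (hσQ : Q ^ (c - (μ - 1)) ≤ σ) : Q ^ (-μ) < σ / (Q * Q') :=
  calc Q ^ (-μ) = Q ^ (c - (μ - 1)) / (Q * Q ^ c) := (rpow_sub_div_mul_rpow hQ).symm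
    _ ≤ σ / (Q * Q ^ c) := div_le_div_of_nonneg_right hσQ (by positivity)
    _ < σ / (Q * Q') := div_lt_div_of_pos_left ((rpow_pos_of_pos hQ _).trans_le hσQ)
        (by positivity) (mul_lt_mul_of_pos_left hQ' hQ)

theorem rpow_neg_lt_one_div_two_mul (hb : 0 < b) (hQ : 0 < Q) (hQb : Q < 2 * τ * b)
    (hτb : 4 * τ ≤ b ^ (μ - 2)) : b ^ (-μ) < 1 / (2 * b * Q) := by
  have hτ : 0 < τ := by nlinarith
  calc b ^ (-μ) = 1 / (b ^ (μ - 2) * b ^ 2) := by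
        rw [rpow_neg hb.le, ← rpow_natCast, ← rpow_add hb, one_div]
        norm_num
    _ ≤ 1 / (4 * τ * b ^ 2) := one_div_le_one_div_of_le (by positivity)
        (mul_le_mul_of_nonneg_right hτb (sq_nonneg b))
    _ < 1 / (2 * b * Q) := one_div_lt_one_div_of_lt (by positivity) (by nlinarith)

end RpowEstimates

theorem exists_lt_le_succ_of_tendsto_atTop {α : Type*} [LinearOrder α] {u : ℕ → α}
    (hu : Tendsto u atTop atTop) {N : ℕ} {t : α} (hN : u N < t) :
    ∃ n, N ≤ n ∧ u n < t ∧ t ≤ u (n + 1) := by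
  by_contra! h
  have hlt : ∀ n, N ≤ n → u n < t := fun n hn => Nat.le_induction hN (fun k hk => h k hk) n hn
  obtain ⟨n, hn, hNn⟩ := ((hu.eventually_ge_atTop t).and (eventually_ge_atTop N)).exists
  exact (hlt n hNn).not_ge hn

theorem infinite_of_frequently_mem_of_tendsto_den {S : Set ℚ} {f : ℕ → ℚ}
    (hf : Tendsto (fun n => ((f n).den : ℝ)) atTop atTop) (hS : ∃ᶠ n in atTop, f n ∈ S) :
    S.Infinite := by
  intro hfin
  obtain ⟨B, hB⟩ := (hfin.image Rat.den).bddAbove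
  obtain ⟨n, hnS, hnB⟩ := (hS.and_eventually (hf.eventually_gt_atTop B)).exists
  exact hnB.not_ge (by exact_mod_cast hB ⟨_, hnS, rfl⟩)

def rationalApproximations (α μ : ℝ) : Set ℚ :=
  {r : ℚ | |α - (r : ℝ)| < (r.den : ℝ) ^ (-μ)}

theorem irrationalityExponent_eq_one_add_limsup {α : ℝ} {u : ℕ → ℝ}
    (hone : 1 ≤ limsup (fun n => (u n : EReal)) atTop)
    (hinf : ∀ μ c : ℝ, μ - 1 < c → (∃ᶠ n in atTop, c < u n) →
      (rationalApproximations α μ).Infinite)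
    (hfin : ∀ μ c : ℝ, 1 < c → c < μ - 1 → (∀ᶠ n in atTop, u n < c) →
      (rationalApproximations α μ).Finite) :
    irrationalityExponent α = 1 + limsup (fun n => (u n : EReal)) atTop := by
  set L := limsup (fun n => (u n : EReal)) atTop
  apply le_antisymm
  · refine sSup_le ?_
    rintro _ ⟨μ, rfl, hμ⟩
    by_contra! hlt
    have hL : L < ((μ - 1 : ℝ) : EReal) := by
      rw [EReal.coe_sub, EReal.lt_sub_iff_add_lt (.inl (EReal.coe_ne_bot 1))
        (.inl (EReal.coe_ne_top 1)), add_comm]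
      exact_mod_cast hlt
    obtain ⟨c, hLc, hcμ⟩ := EReal.lt_iff_exists_real_btwn.1 hL
    refine hμ (hfin μ c ?_ (by exact_mod_cast hcμ) ?_)
    · exact_mod_cast hone.trans_lt hLc
    · exact (eventually_lt_of_limsup_lt hLc).mono fun n hn => by exact_mod_cast hn
  · refine EReal.ge_of_forall_gt_iff_ge.1 fun μ hμ => le_sSup ⟨μ, rfl, ?_⟩
    have hL : ((μ - 1 : ℝ) : EReal) < L := by
      rw [EReal.coe_sub, EReal.coe_one]
      exact EReal.sub_lt_of_lt_add' hμ
    obtain ⟨c, hμc, hcL⟩ := EReal.lt_iff_exists_real_btwn.1 hL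
    exact hinf μ c (by exact_mod_cast hμc)
      ((frequently_lt_of_lt_limsup (by isBoundedDefault) hcL).mono fun n hn => by exact_mod_cast hn)

theorem one_le_limsup_logb_succ {u : ℕ → ℝ} {ρ : ℝ} (hρ : 0 < ρ) (hu : Tendsto u atTop atTop)
    (hgrow : ∀ᶠ n in atTop, ρ * u n ≤ u (n + 1)) :
    1 ≤ limsup (fun n => (logb (u n) (u (n + 1)) : EReal)) atTop := by
  refine EReal.ge_of_forall_gt_iff_ge.1 fun z hz => ?_
  have hz : z < 1 := by exact_mod_cast hz
  have hlim : Tendsto (fun n => 1 + log ρ / log (u n)) atTop (𝓝 1) := by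
    simpa using tendsto_const_nhds.add (tendsto_const_nhds.div_atTop (tendsto_log_atTop.comp hu))
  refine le_limsup_of_frequently_le (Eventually.frequently ?_) (by isBoundedDefault)
  filter_upwards [hlim.eventually (lt_mem_nhds hz), hgrow, hu.eventually_gt_atTop 1]
    with n hzn hn hun
  have hlogn := log_pos hun
  have hlog : log ρ + log (u n) ≤ log (u (n + 1)) := by
    rw [← log_mul hρ.ne' (by positivity)]
    exact log_le_log (by positivity) hn
  have : 1 + log ρ / log (u n) ≤ logb (u n) (u (n + 1)) := by
    rw [logb, one_add_div hlogn.ne', add_comm]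
    exact div_le_div_of_nonneg_right hlog hlogn.le
  exact_mod_cast hzn.le.trans this

theorem notMem_rationalApproximations_of_den_between {α σ τ c μ Q' : ℝ} {r y : ℚ} (hτ : 0 < τ)
    (hlo : σ / (y.den * Q') ≤ |α - y|) (hhi : |α - y| ≤ τ / (y.den * Q'))
    (hQ' : Q' < (y.den : ℝ) ^ c) (hσ : (y.den : ℝ) ^ (c - (μ - 1)) ≤ σ)
    (hbelow : y.den < 2 * τ * r.den) (habove : 2 * τ * r.den ≤ Q')
    (hrμ : 4 * τ ≤ (r.den : ℝ) ^ (μ - 2)) :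
    r ∉ rationalApproximations α μ := by
  intro (hr : |α - r| < (r.den : ℝ) ^ (-μ))
  have hQ'pos : 0 < Q' := lt_of_lt_of_le (by positivity) habove
  rcases eq_or_ne r y with rfl | hne
  · exact (((rpow_neg_lt_div_mul (by positivity) hQ'pos hQ' hσ).trans_le hlo).trans hr).false
  · have hy : |α - y| ≤ 1 / (2 * r.den * y.den) := by
      refine hhi.trans ?_
      rw [div_le_div_iff₀ (by positivity) (by positivity)]
      nlinarith [(by positivity : (0 : ℝ) < y.den)]
    exact (((rpow_neg_lt_one_div_two_mul (by positivity) (by positivity) hbelow hrμ).trans_le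
      (one_div_two_mul_le_abs_sub_of_ne hne hy)).trans hr).false

section Convergents

variable {α σ τ μ c : ℝ} {p q : ℕ → ℤ}

theorem rationalApproximations_infinite_of_frequently (hqpos : ∀ n, 0 < q n)
    (hcop : ∀ n, IsCoprime (p n) (q n)) (hq : Tendsto (fun n => (q n : ℝ)) atTop atTop)
    (hτ : 0 < τ) (happrox : ∀ᶠ n in atTop, |α - p n / q n| ≤ τ / (q n * q (n + 1)))
    (hμc : μ - 1 < c) (hfreq : ∃ᶠ n in atTop, c < logb (q n) (q (n + 1))) :
    (rationalApproximations α μ).Infinite := by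
  have hden n : ((p n / q n : ℚ).den : ℝ) = q n := Rat.den_intCast_div_intCast (hqpos n) (hcop n)
  refine infinite_of_frequently_mem_of_tendsto_den (f := fun n => (p n / q n : ℚ))
    (by simpa only [hden] using hq) ?_
  have hlarge : ∀ᶠ n in atTop, 1 < (q n : ℝ) ∧ τ ≤ (q n : ℝ) ^ (c - (μ - 1)) :=
    (hq.eventually_gt_atTop 1).and
      (((tendsto_rpow_atTop (sub_pos.2 hμc)).comp hq).eventually_ge_atTop τ)
  refine (hfreq.and_eventually (happrox.and hlarge)).mono ?_
  rintro n ⟨hc, happ, hQ, hτQ⟩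
  show |α - ((p n / q n : ℚ) : ℝ)| < ((p n / q n : ℚ).den : ℝ) ^ (-μ)
  rw [hden]
  push_cast
  exact happ.trans_lt (div_mul_lt_rpow_neg (by linarith) hτ
    ((lt_logb_iff_rpow_lt hQ (by exact_mod_cast hqpos _)).1 hc) hτQ)

theorem rationalApproximations_finite_of_eventually (hqpos : ∀ n, 0 < q n)
    (hcop : ∀ n, IsCoprime (p n) (q n)) (hq : Tendsto (fun n => (q n : ℝ)) atTop atTop)
    (hσ : 0 < σ) (hτ : 0 < τ)
    (happrox : ∀ᶠ n in atTop, σ / (q n * q (n + 1)) ≤ |α - p n / q n| ∧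
      |α - p n / q n| ≤ τ / (q n * q (n + 1)))
    (hc : 1 < c) (hcμ : c < μ - 1) (hevc : ∀ᶠ n in atTop, logb (q n) (q (n + 1)) < c) :
    (rationalApproximations α μ).Finite := by
  have hsmall : ∀ᶠ n in atTop, (q n : ℝ) ^ (c - (μ - 1)) ≤ σ := by
    have := ((tendsto_rpow_neg_atTop (sub_pos.2 hcμ)).comp hq).eventually (eventually_le_nhds hσ)
    simpa only [Function.comp_apply, neg_sub] using this
  obtain ⟨N, hN⟩ := eventually_atTop.1
    (happrox.and (hevc.and ((hq.eventually_gt_atTop 1).and hsmall)))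
  obtain ⟨B, hB⟩ := eventually_atTop.1 <|
    ((tendsto_natCast_atTop_atTop.const_mul_atTop (by positivity : 0 < 2 * τ)).eventually_gt_atTop
      (q N : ℝ)).and
    (((tendsto_rpow_atTop (by linarith : 0 < μ - 2)).comp
      tendsto_natCast_atTop_atTop).eventually_ge_atTop (4 * τ))
  refine (Rat.finite_setOf_abs_le_den_le (|α| + 1) B).subset fun r hr => ⟨?_, ?_⟩
  · have : |α - r| ≤ 1 :=
      hr.le.trans (rpow_le_one_of_one_le_of_nonpos (by exact_mod_cast r.pos) (by linarith))
    linarith [abs_sub_abs_le_abs_sub (r : ℝ) α, abs_sub_comm (r : ℝ) α]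
  · by_contra! hrB
    obtain ⟨hNr, hrμ⟩ := hB r.den hrB.le
    obtain ⟨n, hNn, hqn, hqn1⟩ := exists_lt_le_succ_of_tendsto_atTop hq hNr
    obtain ⟨⟨hlo, hhi⟩, hlogb, hQ, hσQ⟩ := hN n hNn
    have hden := Rat.den_intCast_div_intCast (hqpos n) (hcop n)
    have hcast : ((p n / q n : ℚ) : ℝ) = p n / q n := by push_cast; rfl
    refine notMem_rationalApproximations_of_den_between (σ := σ) (c := c) (y := p n / q n)
      (Q' := q (n + 1)) hτ ?_ ?_ ?_ ?_ ?_ hqn1 hrμ hr <;> rw [hden]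
    · rwa [hcast]
    · rwa [hcast]
    · exact (logb_lt_iff_lt_rpow hQ (by exact_mod_cast hqpos _)).1 hlogb
    · exact hσQ
    · exact hqn

theorem irrational_of_abs_sub_le (hqpos : ∀ n, 0 < q n) (hcop : ∀ n, IsCoprime (p n) (q n))
    (hq : Tendsto (fun n => (q n : ℝ)) atTop atTop)
    (happrox : ∀ᶠ n in atTop, 0 < |α - p n / q n| ∧ |α - p n / q n| ≤ τ / (q n * q (n + 1))) :
    Irrational α := by
  rintro ⟨x, rfl⟩
  obtain ⟨n, ⟨hpos, hle⟩, hbig⟩ := (happrox.and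
    ((hq.comp (tendsto_add_atTop_nat 1)).eventually_gt_atTop (τ * x.den))).exists
  have hden := Rat.den_intCast_div_intCast (hqpos n) (hcop n)
  have hcast : ((p n / q n : ℚ) : ℝ) = p n / q n := by push_cast; rfl
  rw [← hcast] at hpos hle
  have hne : x ≠ p n / q n := by
    rintro hx
    simp [hx] at hpos
  have h := (Rat.one_div_den_mul_den_le_abs_sub hne).trans hle
  have hqn : (0 : ℝ) < q n := by exact_mod_cast hqpos n
  have hqn1 : τ * x.den < q (n + 1) := hbig
  rw [hden, div_le_div_iff₀ (by positivity) (mul_pos hqn (by exact_mod_cast hqpos _))] at h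
  nlinarith [mul_lt_mul_of_pos_left hqn1 hqn]

end Convergents

theorem irrationality_exponent_of_good_approximations (α : ℝ) (p q : ℕ → ℤ)
    (hqpos : ∀ n, 0 < q n)
    (hcop : ∀ n, IsCoprime (p n) (q n))
    (hqinf : Filter.Tendsto (fun n => q n) Filter.atTop Filter.atTop)
    (ρ σ τ : ℝ) (hρ : 0 < ρ) (hσ : 0 < σ) (hτ : 0 < τ)
    (hgrow : ∀ᶠ n in Filter.atTop, ρ * (q n : ℝ) ≤ (q (n + 1) : ℝ))
    (happrox : ∀ᶠ n in Filter.atTop,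
      σ / ((q n : ℝ) * (q (n + 1) : ℝ)) ≤ |α - (p n : ℝ) / (q n : ℝ)| ∧
      |α - (p n : ℝ) / (q n : ℝ)| ≤ τ / ((q n : ℝ) * (q (n + 1) : ℝ))) :
    Irrational α ∧
      irrationalityExponent α
        = 1 + Filter.limsup
            (fun n => ((Real.log (q (n + 1) : ℝ) / Real.log (q n : ℝ) : ℝ) : EReal))
            Filter.atTop := by
  have hq : Tendsto (fun n => (q n : ℝ)) atTop atTop := tendsto_intCast_atTop_atTop.comp hqinf
  have hqpos' n : (0 : ℝ) < q n := by exact_mod_cast hqpos n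
  change _ ∧ _ = 1 + limsup (fun n => (logb (q n) (q (n + 1)) : EReal)) atTop
  refine ⟨irrational_of_abs_sub_le hqpos hcop hq (happrox.mono fun n h =>
    ⟨(div_pos hσ (mul_pos (hqpos' n) (hqpos' (n + 1)))).trans_le h.1, h.2⟩), ?_⟩
  exact irrationalityExponent_eq_one_add_limsup (one_le_limsup_logb_succ hρ hq hgrow)
    (fun _ _ hμc hfreq => rationalApproximations_infinite_of_frequently hqpos hcop hq hτ
      (happrox.mono fun _ h => h.2) hμc hfreq)
    (fun _ _ hc hcμ hevc => rationalApproximations_finite_of_eventually hqpos hcop hq hσ hτ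
      happrox hc hcμ hevc)
end

section
/- Let α ∈ ℝ, p_n ∈ ℤ, q_n ∈ ℤ_{>0} coprime with q_n → ∞, and suppose |α - p_n/q_n| ≤ τ/(q_n q_{n+1}) for all large n for some τ > 0 and q_{n+1} ≥ q_n. Then μ(α) ≥ 1 + limsup_{n→∞} (log q_{n+1})/(log q_n). -/
open Filter Real

lemma le_irrationalityExponent_of_forall_lt {α : ℝ} {L : EReal}
    (h : ∀ x : ℝ, (x : EReal) < L → {r : ℚ | |α - (r : ℝ)| < (r.den : ℝ) ^ (-x)}.Infinite) :
    L ≤ irrationalityExponent α := by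
  refine le_of_forall_lt fun c hc => ?_
  obtain ⟨x, hcx, hxL⟩ := EReal.lt_iff_exists_real_btwn.mp hc
  exact hcx.trans_le (le_sSup ⟨x, rfl, h x hxL⟩)

lemma Set.infinite_of_forall_exists_den_gt {S : Set ℚ} (h : ∀ B : ℕ, ∃ r ∈ S, B < r.den) :
    S.Infinite := by
  refine Set.Infinite.of_image Rat.den (Set.infinite_of_not_bddAbove fun ⟨B, hB⟩ => ?_)
  obtain ⟨r, hrS, hBr⟩ := h B
  exact hBr.not_ge (hB (Set.mem_image_of_mem _ hrS))

lemma Rat.den_intCast_div_intCast_s9 {a b : ℤ} (hb : 0 < b) (hab : IsCoprime a b) :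
    (((a / b : ℚ).den : ℤ)) = b :=
  Rat.den_div_eq_of_coprime hb (Int.isCoprime_iff_gcd_eq_one.mp hab)

lemma frequently_lt_of_lt_add_limsup {ι : Type*} {f : Filter ι} {u : ι → ℝ} {c y : ℝ}
    (h : (y : EReal) < c + limsup (fun n => (u n : EReal)) f) :
    ∃ᶠ n in f, y - c < u n := by
  have hlt : ((y - c : ℝ) : EReal) < limsup (fun n => (u n : EReal)) f := by
    rw [EReal.coe_sub]
    exact EReal.sub_lt_of_lt_add' h
  exact (frequently_lt_of_lt_limsup (by isBoundedDefault) hlt).mono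
    fun n hn => EReal.coe_lt_coe_iff.mp hn

lemma div_mul_lt_rpow_neg_s9 {a b τ x y : ℝ} (ha : 0 < a) (hb : a ^ (y - 1) < b)
    (hτ : τ < a ^ (y - x)) :
    τ / (a * b) < a ^ (-x) := by
  have hb0 : 0 < b := (rpow_pos_of_pos ha _).trans hb
  rw [div_lt_iff₀ (mul_pos ha hb0)]
  calc τ < a ^ (y - x) := hτ
    _ = a ^ (1 - x) * a ^ (y - 1) := by rw [← rpow_add ha]; ring_nf
    _ < a ^ (1 - x) * b := by gcongr
    _ = a ^ (-x) * (a * b) := by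
      rw [sub_eq_neg_add, rpow_add_one ha.ne', mul_assoc]

theorem irrationality_exponent_lower_bound_general (α : ℝ) (p q : ℕ → ℤ)
    (hcop : ∀ n, IsCoprime (p n) (q n))
    (hqinf : Filter.Tendsto (fun n => q n) Filter.atTop Filter.atTop)
    (τ : ℝ)
    (happrox : ∀ᶠ n in Filter.atTop,
      |α - (p n : ℝ) / (q n : ℝ)| ≤ τ / ((q n : ℝ) * (q (n + 1) : ℝ))) :
    irrationalityExponent α
      ≥ 1 + Filter.limsup
          (fun n => ((Real.log (q (n + 1) : ℝ) / Real.log (q n : ℝ) : ℝ) : EReal))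
          Filter.atTop := by
  refine le_irrationalityExponent_of_forall_lt fun x hx => ?_
  obtain ⟨y, hxy, hy⟩ := EReal.lt_iff_exists_real_btwn.mp hx
  have hxy : x < y := EReal.coe_lt_coe_iff.mp hxy
  have hqR : Tendsto (fun n => (q n : ℝ)) atTop atTop := tendsto_intCast_atTop_atTop.comp hqinf
  have hq_gt_one : ∀ᶠ n in atTop, 1 < (q n : ℝ) := hqR.eventually_gt_atTop 1
  have hq_succ_pos : ∀ᶠ n in atTop, 0 < (q (n + 1) : ℝ) :=
    (tendsto_add_atTop_nat 1).eventually (hqR.eventually_gt_atTop 0)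
  have hτ_lt : ∀ᶠ n in atTop, τ < (q n : ℝ) ^ (y - x) :=
    ((tendsto_rpow_atTop (sub_pos.mpr hxy)).comp hqR).eventually_gt_atTop τ
  refine Set.infinite_of_forall_exists_den_gt fun B => ?_
  obtain ⟨n, hlog, happ, hq1, hq2, hτq, hB⟩ :=
    ((frequently_lt_of_lt_add_limsup hy).and_eventually (happrox.and (hq_gt_one.and
      (hq_succ_pos.and (hτ_lt.and (hqinf.eventually_gt_atTop (B : ℤ))))))).exists
  have hden : (((p n / q n : ℚ).den : ℤ)) = q n :=
    Rat.den_intCast_div_intCast_s9 (by exact_mod_cast zero_lt_one.trans hq1) (hcop n)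
  refine ⟨p n / q n, ?_, by omega⟩
  have hdenR : (((p n / q n : ℚ).den : ℝ)) = q n := by exact_mod_cast hden
  show |α - ((p n / q n : ℚ) : ℝ)| < (((p n / q n : ℚ).den : ℝ)) ^ (-x)
  rw [hdenR]
  push_cast
  calc |α - (p n : ℝ) / q n| ≤ τ / (q n * q (n + 1)) := happ
    _ < (q n : ℝ) ^ (-x) :=
      div_mul_lt_rpow_neg_s9 (zero_lt_one.trans hq1) ((lt_logb_iff_rpow_lt hq1 hq2).mp hlog) hτq

theorem irrationality_exponent_lower_bound (α : ℝ) (p q : ℕ → ℤ)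
    (hqpos : ∀ n, 0 < q n)
    (hcop : ∀ n, IsCoprime (p n) (q n))
    (hqinf : Filter.Tendsto (fun n => q n) Filter.atTop Filter.atTop)
    (τ : ℝ) (hτ : 0 < τ)
    (hmono : ∀ n, q n ≤ q (n + 1))
    (happrox : ∀ᶠ n in Filter.atTop,
      |α - (p n : ℝ) / (q n : ℝ)| ≤ τ / ((q n : ℝ) * (q (n + 1) : ℝ))) :
    irrationalityExponent α
      ≥ 1 + Filter.limsup
          (fun n => ((Real.log (q (n + 1) : ℝ) / Real.log (q n : ℝ) : ℝ) : EReal))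
          Filter.atTop :=
  irrationality_exponent_lower_bound_general α p q hcop hqinf τ happrox
end

section
/- Let m, h be positive integers and q_n the semi-regular denominators. Assume a_m = 1 and a_{m+k} = -1 for 1 ≤ k ≤ h. Then q_{m+k} ≥ ((k+2)/(k+1)) q_{m+k-1} for 0 ≤ k ≤ h-1. -/
theorem srcf_negative_run_growth (a b q : ℤ → ℤ) (m h : ℤ)
    (ha : ∀ n : ℤ, 1 ≤ n → a n = 1 ∨ a n = -1)
    (hb : ∀ n : ℤ, 1 ≤ n → 1 ≤ b n)
    (hba : ∀ n : ℤ, 1 ≤ n → 1 ≤ b n + a (n + 1))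
    (hqm1 : q (-1) = 0) (hq0 : q 0 = 1)
    (hq : ∀ n : ℤ, 1 ≤ n → q n = b n * q (n - 1) + a n * q (n - 2))
    (hm : 1 ≤ m) (hh : 1 ≤ h)
    (ham : a m = 1)
    (harun : ∀ k : ℤ, 1 ≤ k → k ≤ h → a (m + k) = -1) :
    ∀ k : ℤ, 0 ≤ k → k ≤ h - 1 →
      ((k + 2 : ℝ) / (k + 1 : ℝ)) * (q (m + k - 1) : ℝ) ≤ (q (m + k) : ℝ) := by
  -- positivity invariant
  have hpos : ∀ n : ℤ, 0 ≤ n →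
      1 ≤ q n ∧ 1 ≤ q n + a (n + 1) * q (n - 1) ∧ 0 ≤ q (n - 1) := by
    refine Int.le_induction ?_ ?_
    · rw [show (0:ℤ) - 1 = -1 from by ring]
      refine ⟨by simp [hq0], by simp [hq0, hqm1], by simp [hqm1]⟩
    · intro n hn ih
      obtain ⟨h1, h2, h3⟩ := ih
      have hqn1 : q (n + 1) = b (n + 1) * q n + a (n + 1) * q (n - 1) := by
        have := hq (n + 1) (by linarith)
        rwa [show n + 1 - 1 = n from by ring, show n + 1 - 2 = n - 1 from by ring] at this
      have hb1 := hb (n + 1) (by linarith)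
      have ha1 := ha (n + 1) (by linarith)
      have ha2 := ha (n + 2) (by linarith)
      have hpos1 : 1 ≤ q (n + 1) := by
        rcases ha1 with hA | hA <;> rw [hA] at hqn1 <;>
          nlinarith [mul_nonneg (by linarith : (0:ℤ) ≤ b (n + 1) - 1) (by linarith : (0:ℤ) ≤ q n)]
      refine ⟨hpos1, ?_, ?_⟩
      · rw [show n + 1 + 1 = n + 2 from by ring, show n + 1 - 1 = n from by ring]
        rcases ha2 with hA | hA
        · rw [hA]; linarith
        · have hb2 : 2 ≤ b (n + 1) := by
            have := hba (n + 1) (by linarith)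
            rw [show n + 1 + 1 = n + 2 from by ring, hA] at this
            linarith
          rw [hA]
          nlinarith [mul_nonneg (by linarith : (0:ℤ) ≤ b (n + 1) - 2) (by linarith : (0:ℤ) ≤ q n)]
      · rw [show n + 1 - 1 = n from by ring]; linarith
  -- integer version of the growth inequality
  have hint : ∀ k : ℤ, 0 ≤ k → k ≤ h - 1 →
      (k + 2) * q (m + k - 1) ≤ (k + 1) * q (m + k) := by
    refine Int.le_induction ?_ ?_
    · intro _
      have ha1 : a (m + 1) = -1 := harun 1 le_rfl hh
      have hb2 : 2 ≤ b m := by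
        have := hba m hm
        rw [ha1] at this; linarith
      have hqm : q m = b m * q (m - 1) + a m * q (m - 2) := hq m hm
      rw [ham] at hqm
      have hp := hpos (m - 1) (by linarith)
      have hq1 : 1 ≤ q (m - 1) := hp.1
      have hq2 : 0 ≤ q (m - 2) := by
        have := hp.2.2
        rwa [show m - 1 - 1 = m - 2 from by ring] at this
      rw [show m + (0:ℤ) - 1 = m - 1 from by ring, show m + (0:ℤ) = m from by ring]
      nlinarith [mul_nonneg (by linarith : (0:ℤ) ≤ b m - 2) (by linarith : (0:ℤ) ≤ q (m - 1))]
    · intro k hk ih hk1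
      have ihk := ih (by linarith)
      have ha1 : a (m + k + 1) = -1 := by
        have := harun (k + 1) (by linarith) (by linarith)
        rwa [show m + (k + 1) = m + k + 1 from by ring] at this
      have ha2 : a (m + k + 2) = -1 := by
        have := harun (k + 2) (by linarith) (by linarith)
        rwa [show m + (k + 2) = m + k + 2 from by ring] at this
      have hb2 : 2 ≤ b (m + k + 1) := by
        have := hba (m + k + 1) (by linarith)
        rw [show m + k + 1 + 1 = m + k + 2 from by ring, ha2] at this
        linarith
      have hqr : q (m + k + 1) = b (m + k + 1) * q (m + k) - q (m + k - 1) := by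
        have := hq (m + k + 1) (by linarith)
        rw [show m + k + 1 - 1 = m + k from by ring,
          show m + k + 1 - 2 = m + k - 1 from by ring, ha1] at this
        linarith
      have hqk : 1 ≤ q (m + k) := (hpos (m + k) (by linarith)).1
      rw [show m + (k + 1) - 1 = m + k from by ring, show m + (k + 1) = m + k + 1 from by ring]
      nlinarith [mul_nonneg (mul_nonneg (by linarith : (0:ℤ) ≤ k + 2)
        (by linarith : (0:ℤ) ≤ b (m + k + 1) - 2)) (by linarith : (0:ℤ) ≤ q (m + k))]
  -- conversion to reals
  intro k hk0 hk1
  have h2 := hint k hk0 hk1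
  have hk1R : (0:ℝ) < (k:ℝ) + 1 := by
    have : (0:ℤ) < k + 1 := by linarith
    exact_mod_cast this
  rw [div_mul_eq_mul_div, div_le_iff₀ hk1R]
  have : ((k + 2 : ℤ) * q (m + k - 1) : ℝ) ≤ ((k + 1 : ℤ) * q (m + k) : ℝ) := by
    exact_mod_cast h2
  push_cast at this
  nlinarith [this]
end

section
/- Let m, h be positive integers and q_n the semi-regular denominators. Assume a_m = 1 and a_{m+k} = -1 for 1 ≤ k ≤ h. Then q_{m+h} ≥ (b_{m+h}/(h+1)) q_{m+h-1}. -/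
/-!
Along the negative run the ratio `q_{m+k} / q_{m+k-1}` stays at least `(k+2)/(k+1)`. At `k = 0`
this is `q_m ≥ 2 q_{m-1}`, as `a_m = 1` and `b_m ≥ 2`. A step `q_{n+1} = b q_n - q_{n-1}` with
`b ≥ 2` turns `(c+1) q_{n-1} ≤ c q_n` into `(c+2) q_n ≤ (c+1) q_{n+1}`. At the last step of the
run only `b ≥ 1` is known, and the same computation gives `b q_{m+h-1} ≤ (h+1) q_{m+h}`.
-/

namespace SemiRegularContinuedFraction

variable {a b q : ℤ → ℤ}

theorem denom_succ (hq : ∀ n : ℤ, 1 ≤ n → q n = b n * q (n - 1) + a n * q (n - 2))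
    {n : ℤ} (hn : 0 ≤ n) : q (n + 1) = b (n + 1) * q n + a (n + 1) * q (n - 1) := by
  simpa only [add_sub_cancel_right, show n + 1 - 2 = n - 1 by ring] using hq (n + 1) (by omega)

theorem two_le_of_next_eq_neg_one (hba : ∀ n : ℤ, 1 ≤ n → 1 ≤ b n + a (n + 1))
    {n : ℤ} (hn : 1 ≤ n) (ha : a (n + 1) = -1) : 2 ≤ b n := by
  have := hba n hn
  omega

/-- The second inequality is the invariant that keeps the denominators positive when `a = -1`. -/
theorem one_le_denom_and_one_le_denom_add_mul
    (ha : ∀ n : ℤ, 1 ≤ n → a n = 1 ∨ a n = -1)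
    (hb : ∀ n : ℤ, 1 ≤ n → 1 ≤ b n)
    (hba : ∀ n : ℤ, 1 ≤ n → 1 ≤ b n + a (n + 1))
    (hqm1 : q (-1) = 0) (hq0 : q 0 = 1)
    (hq : ∀ n : ℤ, 1 ≤ n → q n = b n * q (n - 1) + a n * q (n - 2))
    {n : ℤ} (hn : 0 ≤ n) : 1 ≤ q n ∧ 1 ≤ q n + a (n + 1) * q (n - 1) := by
  induction n, hn using Int.leInduction with
  | base => simp [hq0, hqm1]
  | succ n hn ih =>
    obtain ⟨hqn, hinv⟩ := ih
    have hrec := denom_succ hq hn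
    have hb1 := hb (n + 1) (by omega)
    have hq1 : 1 ≤ q (n + 1) := by nlinarith
    refine ⟨hq1, ?_⟩
    rw [add_sub_cancel_right]
    rcases ha (n + 1 + 1) (by omega) with hnext | hnext
    · rw [hnext]; omega
    · have hb2 := two_le_of_next_eq_neg_one hba (by omega) hnext
      rw [hnext]; nlinarith

theorem denom_nonneg
    (ha : ∀ n : ℤ, 1 ≤ n → a n = 1 ∨ a n = -1)
    (hb : ∀ n : ℤ, 1 ≤ n → 1 ≤ b n)
    (hba : ∀ n : ℤ, 1 ≤ n → 1 ≤ b n + a (n + 1))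
    (hqm1 : q (-1) = 0) (hq0 : q 0 = 1)
    (hq : ∀ n : ℤ, 1 ≤ n → q n = b n * q (n - 1) + a n * q (n - 2))
    {n : ℤ} (hn : -1 ≤ n) : 0 ≤ q n := by
  obtain rfl | hn := eq_or_lt_of_le hn
  · exact hqm1.ge
  · have := (one_le_denom_and_one_le_denom_add_mul ha hb hba hqm1 hq0 hq (n := n) (by omega)).1
    omega

theorem le_mul_denom_succ_of_eq_neg_one
    (hq : ∀ n : ℤ, 1 ≤ n → q n = b n * q (n - 1) + a n * q (n - 2))
    {n c : ℤ} (hn : 0 ≤ n) (ha : a (n + 1) = -1)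
    (hratio : (c + 1) * q (n - 1) ≤ c * q n) :
    b (n + 1) * q n + c * (b (n + 1) - 1) * q n ≤ (c + 1) * q (n + 1) := by
  rw [denom_succ hq hn, ha]
  linarith

theorem two_mul_denom_pred_le_denom
    (ha : ∀ n : ℤ, 1 ≤ n → a n = 1 ∨ a n = -1)
    (hb : ∀ n : ℤ, 1 ≤ n → 1 ≤ b n)
    (hba : ∀ n : ℤ, 1 ≤ n → 1 ≤ b n + a (n + 1))
    (hqm1 : q (-1) = 0) (hq0 : q 0 = 1)
    (hq : ∀ n : ℤ, 1 ≤ n → q n = b n * q (n - 1) + a n * q (n - 2))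
    {m : ℤ} (hm : 1 ≤ m) (ham : a m = 1) (hanext : a (m + 1) = -1) :
    2 * q (m - 1) ≤ q m := by
  have hbm := two_le_of_next_eq_neg_one hba hm hanext
  have hq1 := denom_nonneg ha hb hba hqm1 hq0 hq (n := m - 1) (by omega)
  have hq2 := denom_nonneg ha hb hba hqm1 hq0 hq (n := m - 2) (by omega)
  rw [hq m hm, ham]
  nlinarith

theorem denom_ratio_bound_of_negative_run
    (ha : ∀ n : ℤ, 1 ≤ n → a n = 1 ∨ a n = -1)
    (hb : ∀ n : ℤ, 1 ≤ n → 1 ≤ b n)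
    (hba : ∀ n : ℤ, 1 ≤ n → 1 ≤ b n + a (n + 1))
    (hqm1 : q (-1) = 0) (hq0 : q 0 = 1)
    (hq : ∀ n : ℤ, 1 ≤ n → q n = b n * q (n - 1) + a n * q (n - 2))
    {m h : ℤ} (hm : 1 ≤ m) (ham : a m = 1)
    (harun : ∀ k : ℤ, 1 ≤ k → k ≤ h → a (m + k) = -1)
    {k : ℤ} (hk : 0 ≤ k) (hkh : k < h) :
    (k + 2) * q (m + k - 1) ≤ (k + 1) * q (m + k) := by
  induction k, hk using Int.leInduction with
  | base =>
    simpa using two_mul_denom_pred_le_denom ha hb hba hqm1 hq0 hq hm ham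
      (harun 1 le_rfl (by omega))
  | succ k hk ih =>
    have hstep := le_mul_denom_succ_of_eq_neg_one hq (n := m + k) (c := k + 1) (by omega)
      (by simpa [add_assoc] using harun (k + 1) (by omega) (by omega))
      (by simpa [add_assoc] using ih (by omega))
    have hb2 : 2 ≤ b (m + k + 1) := two_le_of_next_eq_neg_one hba (by omega)
      (by simpa [add_assoc] using harun (k + 2) (by omega) (by omega))
    have hqk := denom_nonneg ha hb hba hqm1 hq0 hq (n := m + k) (by omega)
    rw [show m + (k + 1) - 1 = m + k by ring, ← add_assoc]
    nlinarith [mul_nonneg (mul_nonneg (by omega : (0 : ℤ) ≤ k + 1)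
      (by omega : 0 ≤ b (m + k + 1) - 2)) hqk]

end SemiRegularContinuedFraction

open SemiRegularContinuedFraction in
theorem srcf_negative_run_final_growth (a b q : ℤ → ℤ) (m h : ℤ)
    (ha : ∀ n : ℤ, 1 ≤ n → a n = 1 ∨ a n = -1)
    (hb : ∀ n : ℤ, 1 ≤ n → 1 ≤ b n)
    (hba : ∀ n : ℤ, 1 ≤ n → 1 ≤ b n + a (n + 1))
    (hqm1 : q (-1) = 0) (hq0 : q 0 = 1)
    (hq : ∀ n : ℤ, 1 ≤ n → q n = b n * q (n - 1) + a n * q (n - 2))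
    (hm : 1 ≤ m) (hh : 1 ≤ h)
    (ham : a m = 1)
    (harun : ∀ k : ℤ, 1 ≤ k → k ≤ h → a (m + k) = -1) :
    ((b (m + h) : ℝ) / (h + 1 : ℝ)) * (q (m + h - 1) : ℝ) ≤ (q (m + h) : ℝ) := by
  have hratio := denom_ratio_bound_of_negative_run ha hb hba hqm1 hq0 hq hm ham harun
    (k := h - 1) (by omega) (by omega)
  rw [show m + (h - 1) = m + h - 1 by ring, show h - 1 + 2 = h + 1 by ring, sub_add_cancel]
    at hratio
  have hlast := le_mul_denom_succ_of_eq_neg_one hq (n := m + h - 1) (c := h) (by omega)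
    (by simpa using harun h hh le_rfl) hratio
  rw [sub_add_cancel] at hlast
  have hq' := denom_nonneg ha hb hba hqm1 hq0 hq (n := m + h - 1) (by omega)
  have hbh := hb (m + h) (by omega)
  have hint : b (m + h) * q (m + h - 1) ≤ q (m + h) * (h + 1) := by
    nlinarith [mul_nonneg (mul_nonneg (by omega : (0 : ℤ) ≤ h)
      (by omega : 0 ≤ b (m + h) - 1)) hq']
  rw [div_mul_eq_mul_div, div_le_iff₀ (by positivity)]
  exact_mod_cast hint
end

section
/- Let m ≥ 1 and h ≥ 1 be integers and q_n the semi-regular denominators with all a_n = -1 allowed (general SRCF). Suppose b_m ≥ 3, b_{m+k} = 2 for 1 ≤ k ≤ h, and b_{m-1} ≥ 2 if m ≥ 2. Then q_{m+k} ≥ ((k+2)/(k+1)) q_{m+k-1} for 0 ≤ k ≤ h. -/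
private lemma srcf_pos_aux (a b q : ℤ → ℤ)
    (hb : ∀ n : ℤ, 1 ≤ n → 1 ≤ b n)
    (hba : ∀ n : ℤ, 1 ≤ n → 1 ≤ b n + a (n + 1))
    (hqm1 : q (-1) = 0) (hq0 : q 0 = 1)
    (hq : ∀ n : ℤ, 1 ≤ n → q n = b n * q (n - 1) + a n * q (n - 2)) :
    ∀ n : ℤ, 0 ≤ n → 1 ≤ q n ∧ 1 ≤ q n + a (n + 1) * q (n - 1) := by
  refine Int.le_induction ?_ ?_
  · simp [hq0, hqm1]
  · intro n hn ih
    obtain ⟨h1, h2⟩ := ih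
    have hrec := hq (n + 1) (by omega)
    have e1 : n + 1 - 1 = n := by ring
    have e2 : n + 1 - 2 = n - 1 := by ring
    rw [e1, e2] at hrec
    have hb1 : 1 ≤ b (n + 1) := hb (n + 1) (by omega)
    have hba1 : 1 ≤ b (n + 1) + a (n + 1 + 1) := hba (n + 1) (by omega)
    constructor
    · nlinarith
    · have e3 : n + 1 - 1 = n := by ring
      rw [e3]
      nlinarith

theorem srcf_b_eq_two_run_growth (a b q : ℤ → ℤ) (m h : ℤ)
    (ha : ∀ n : ℤ, 1 ≤ n → a n = 1 ∨ a n = -1)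
    (hb : ∀ n : ℤ, 1 ≤ n → 1 ≤ b n)
    (hba : ∀ n : ℤ, 1 ≤ n → 1 ≤ b n + a (n + 1))
    (hqm1 : q (-1) = 0) (hq0 : q 0 = 1)
    (hq : ∀ n : ℤ, 1 ≤ n → q n = b n * q (n - 1) + a n * q (n - 2))
    (hm : 1 ≤ m) (hh : 1 ≤ h)
    (hbm : 3 ≤ b m)
    (hbrun : ∀ k : ℤ, 1 ≤ k → k ≤ h → b (m + k) = 2)
    (hbm1 : 2 ≤ m → 2 ≤ b (m - 1)) :
    ∀ k : ℤ, 0 ≤ k → k ≤ h →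
      ((k + 2 : ℝ) / (k + 1 : ℝ)) * (q (m + k - 1) : ℝ) ≤ (q (m + k) : ℝ) := by
  have A := srcf_pos_aux a b q hb hba hqm1 hq0 hq
  -- q(m-1) ≥ 1, q(m-2) ≥ 0, q(m-2) ≤ q(m-1)
  have hqm1pos : 1 ≤ q (m - 1) := (A (m - 1) (by omega)).1
  have hqm2nn : 0 ≤ q (m - 2) := by
    rcases eq_or_lt_of_le hm with heq | hlt
    · rw [show m - 2 = -1 by omega, hqm1]
    · exact le_trans zero_le_one (A (m - 2) (by omega)).1
  have hmono : q (m - 2) ≤ q (m - 1) := by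
    rcases eq_or_lt_of_le hm with heq | hlt
    · rw [show m - 2 = -1 by omega, show m - 1 = 0 by omega, hqm1, hq0]; norm_num
    · have hrec := hq (m - 1) (by omega)
      have e1 : m - 1 - 1 = m - 2 := by ring
      have e2 : m - 1 - 2 = m - 3 := by ring
      rw [e1, e2] at hrec
      have hA2 := (A (m - 2) (by omega)).2
      have e3 : m - 2 + 1 = m - 1 := by ring
      have e4 : m - 2 - 1 = m - 3 := by ring
      rw [e3, e4] at hA2
      have hbm1' : 2 ≤ b (m - 1) := hbm1 (by omega)
      nlinarith
  -- integer form by induction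
  have key : ∀ k : ℤ, 0 ≤ k → k ≤ h →
      0 ≤ q (m + k - 1) ∧ (k + 2) * q (m + k - 1) ≤ (k + 1) * q (m + k) := by
    refine Int.le_induction ?_ ?_
    · intro _
      have e0 : m + 0 - 1 = m - 1 := by ring
      have e1 : m + 0 = m := by ring
      rw [e0, e1]
      refine ⟨by omega, ?_⟩
      have hrec := hq m (by omega)
      rcases ha m (by omega) with h1 | h1 <;> nlinarith
    · intro k hk ih hkh
      obtain ⟨hnn, hineq⟩ := ih (by omega)
      have hqmk : 0 ≤ q (m + k) := by nlinarith
      have hrec := hq (m + k + 1) (by omega)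
      have e1 : m + k + 1 - 1 = m + k := by ring
      have e2 : m + k + 1 - 2 = m + k - 1 := by ring
      rw [e1, e2] at hrec
      have hbk : b (m + k + 1) = 2 := by
        have := hbrun (k + 1) (by omega) hkh
        rwa [show m + (k + 1) = m + k + 1 by ring] at this
      rw [hbk] at hrec
      have e3 : m + (k + 1) - 1 = m + k := by ring
      have e4 : m + (k + 1) = m + k + 1 := by ring
      rw [e3, e4]
      refine ⟨hqmk, ?_⟩
      rcases ha (m + k + 1) (by omega) with h1 | h1 <;> rw [h1] at hrec <;> nlinarith
  intro k hk hkh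
  obtain ⟨hnn, hineq⟩ := key k hk hkh
  have hk1 : (0 : ℝ) < (k : ℝ) + 1 := by
    have : (0 : ℝ) ≤ (k : ℝ) := by exact_mod_cast hk
    linarith
  rw [div_mul_eq_mul_div, div_le_iff₀ hk1]
  have : ((k + 2 : ℤ) * q (m + k - 1) : ℝ) ≤ ((k + 1 : ℤ) * q (m + k) : ℝ) := by
    exact_mod_cast hineq
  push_cast at this ⊢
  nlinarith
end

section
/- The value of an infinite semi-regular continued fraction α = b_0 + a_1/(b_1 + a_2/(b_2 + ⋯)) with a_n ∈ {-1,1}, b_n ≥ 1 integers, b_n + a_{n+1} ≥ 1 for all n ≥ 1, and b_n + a_{n+1} ≥ 2 infinitely often, is irrational. -/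
/-!
Write `T x m = x m + a (m + 1) * x (m - 1)`. For a solution `x` of the recurrence,
`x (m + 1) = (b (m + 1) - 1) x m + T x m` and
`T x (m + 1) = (b (m + 1) + a (m + 2) - 1) x m + T x m`, with nonnegative coefficients,
so a domination `|x| ≤ y`, `|T x| ≤ T y` between two solutions propagates. Applied to `y = q`
and `x m = T q n * (p m q n - p n q m)` it gives `|α - p n / q n| ≤ 1 / (q n T q n)`.
Since `T q` grows by at least `1` each time `b n + a (n + 1) ≥ 2`, a rational `α = u / v`
equals `p m / q m` as soon as `T q m > v`, hence for two consecutive `m`; this contradicts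
`p (m + 1) q m - p m q (m + 1) = ±1`.
-/

open Filter Topology

theorem abs_mul_add_le {R : Type*} [Ring R] [LinearOrder R] [IsOrderedRing R] {c u v U V : R}
    (hc : 0 ≤ c) (hu : |u| ≤ U) (hv : |v| ≤ V) : |c * u + v| ≤ c * U + V :=
  calc |c * u + v| ≤ |c * u| + |v| := abs_add_le _ _
    _ = c * |u| + |v| := by rw [abs_mul, abs_of_nonneg hc]
    _ ≤ c * U + V := by gcongr

theorem abs_div_sub_div_le {P Q P' Q' T : ℤ} (hQ : 0 < Q) (hQ' : 0 < Q') (hT : 0 < T)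
    (h : |T * (P * Q' - P' * Q)| ≤ Q) : |(P / Q - P' / Q' : ℝ)| ≤ 1 / (Q' * T) := by
  have hQr : (0 : ℝ) < Q := by exact_mod_cast hQ
  have hQr' : (0 : ℝ) < Q' := by exact_mod_cast hQ'
  have hTr : (0 : ℝ) < T := by exact_mod_cast hT
  have hr : T * |(P * Q' - P' * Q : ℝ)| ≤ Q := by
    rw [← abs_of_pos hTr, ← abs_mul]
    exact_mod_cast h
  rw [div_sub_div _ _ hQr.ne' hQr'.ne', abs_div, abs_of_pos (mul_pos hQr hQr'),
    div_le_div_iff₀ (by positivity) (by positivity), mul_comm (Q : ℝ) P']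
  nlinarith

theorem Rat.cast_mul_eq_of_abs_sub_lt (x : ℚ) {P Q : ℤ} (hQ : 0 < Q)
    (h : |(x - P / Q : ℝ)| < 1 / (x.den * Q)) : (x : ℝ) * Q = P := by
  have hQr : (0 : ℝ) < Q := by exact_mod_cast hQ
  have hd : (0 : ℝ) < x.den := by exact_mod_cast x.pos
  have hk : (x - P / Q : ℝ) = ((x.num * Q - x.den * P : ℤ) : ℝ) / (x.den * Q) := by
    rw [Rat.cast_def]
    push_cast
    field_simp
  rw [hk, abs_div, abs_of_pos (mul_pos hd hQr), div_lt_div_iff_of_pos_right (by positivity),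
    ← Int.cast_abs, ← Int.cast_one, Int.cast_lt, Int.abs_lt_one_iff, sub_eq_zero] at h
  rw [Rat.cast_def]
  field_simp
  exact_mod_cast h

namespace SemiregularContinuedFraction

def SatisfiesRecurrence (a b : ℤ → ℤ) (N : ℤ) (x : ℤ → ℤ) : Prop :=
  ∀ m, N ≤ m → x m = b m * x (m - 1) + a m * x (m - 2)

/-- The value `x (m + 1)` would take if `b (m + 1)` were `1`. -/
def trunc (a x : ℤ → ℤ) (m : ℤ) : ℤ := x m + a (m + 1) * x (m - 1)

def casoratian (x y : ℤ → ℤ) (n : ℤ) : ℤ := x (n + 1) * y n - x n * y (n + 1)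

variable {a b p q x y : ℤ → ℤ} {N m n : ℤ}

namespace SatisfiesRecurrence

theorem mono (hx : SatisfiesRecurrence a b N x) {N' : ℤ} (hN : N ≤ N') :
    SatisfiesRecurrence a b N' x :=
  fun m hm => hx m (hN.trans hm)

theorem succ_eq (hx : SatisfiesRecurrence a b N x) (hm : N ≤ m + 1) :
    x (m + 1) = (b (m + 1) - 1) * x m + trunc a x m := by
  rw [hx (m + 1) hm, trunc, add_sub_cancel_right, show m + 1 - 2 = m - 1 by ring]
  ring

theorem trunc_succ_eq (hx : SatisfiesRecurrence a b N x) (hm : N ≤ m + 1) :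
    trunc a x (m + 1) = (b (m + 1) + a (m + 1 + 1) - 1) * x m + trunc a x m := by
  rw [trunc, hx.succ_eq hm, add_sub_cancel_right]
  ring

theorem trunc_le_succ (hx : SatisfiesRecurrence a b N x) (hb : ∀ n, 1 ≤ n → 1 ≤ b n)
    (hm : N ≤ m + 1) (hm₀ : 0 ≤ m) (hxm : 0 ≤ x m) : trunc a x m ≤ x (m + 1) := by
  rw [hx.succ_eq hm]
  nlinarith [hb (m + 1) (by omega)]

theorem trunc_le_trunc_succ (hx : SatisfiesRecurrence a b N x)
    (hba : ∀ n, 1 ≤ n → 1 ≤ b n + a (n + 1)) (hm : N ≤ m + 1) (hm₀ : 0 ≤ m) (hxm : 0 ≤ x m) :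
    trunc a x m ≤ trunc a x (m + 1) := by
  rw [hx.trunc_succ_eq hm]
  nlinarith [hba (m + 1) (by omega)]

theorem casoratian_succ (hx : SatisfiesRecurrence a b N x) (hy : SatisfiesRecurrence a b N y)
    (hn : N ≤ n + 2) : casoratian x y (n + 1) = -a (n + 2) * casoratian x y n := by
  have hx' := hx (n + 2) hn
  have hy' := hy (n + 2) hn
  rw [show n + 2 - 1 = n + 1 by ring, show n + 2 - 2 = n by ring] at hx' hy'
  rw [casoratian, casoratian, show n + 1 + 1 = n + 2 by ring, hx', hy']
  ring

theorem abs_le_of_abs_le (hx : SatisfiesRecurrence a b (N + 1) x)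
    (hy : SatisfiesRecurrence a b (N + 1) y) (hb : ∀ n, 1 ≤ n → 1 ≤ b n)
    (hba : ∀ n, 1 ≤ n → 1 ≤ b n + a (n + 1)) (hN : 0 ≤ N) (h₀ : |x N| ≤ y N)
    (h₁ : |trunc a x N| ≤ trunc a y N) :
    ∀ m, N ≤ m → |x m| ≤ y m ∧ |trunc a x m| ≤ trunc a y m := by
  intro m hm
  induction m, hm using Int.leInduction with
  | base => exact ⟨h₀, h₁⟩
  | succ m hm ih =>
    have hbm := hb (m + 1) (by omega)
    have hbam := hba (m + 1) (by omega)
    rw [hx.succ_eq (by omega), hy.succ_eq (by omega), hx.trunc_succ_eq (by omega),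
      hy.trunc_succ_eq (by omega)]
    exact ⟨abs_mul_add_le (by omega) ih.1 ih.2, abs_mul_add_le (by omega) ih.1 ih.2⟩

end SatisfiesRecurrence

theorem pos_and_one_le_trunc (hq : SatisfiesRecurrence a b 1 q) (hb : ∀ n, 1 ≤ n → 1 ≤ b n)
    (hba : ∀ n, 1 ≤ n → 1 ≤ b n + a (n + 1)) (hq₀ : q 0 = 1) (hq_neg_one : q (-1) = 0) :
    ∀ m, 0 ≤ m → 0 < q m ∧ 1 ≤ trunc a q m := by
  intro m hm
  induction m, hm using Int.leInduction with
  | base => simp [trunc, hq₀, hq_neg_one]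
  | succ m hm ih =>
    have h₁ := hq.trunc_le_succ hb (by omega) hm ih.1.le
    have h₂ := hq.trunc_le_trunc_succ hba (by omega) hm ih.1.le
    omega

theorem trunc_monotoneOn (hy : SatisfiesRecurrence a b 1 y)
    (hba : ∀ n, 1 ≤ n → 1 ≤ b n + a (n + 1)) (hy₀ : ∀ m, 0 ≤ m → 0 ≤ y m) :
    MonotoneOn (trunc a y) (Set.Ici 0) := by
  rintro n (hn : 0 ≤ n) m - hm
  induction m, hm using Int.leInduction with
  | base => exact le_rfl
  | succ m hm ih =>
    exact ih.trans (hy.trunc_le_trunc_succ hba (by omega) (by omega) (hy₀ m (by omega)))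

theorem exists_lt_trunc (hq : SatisfiesRecurrence a b 1 q)
    (hba : ∀ n, 1 ≤ n → 1 ≤ b n + a (n + 1))
    (hba₂ : ∀ N, ∃ n, N ≤ n ∧ 1 ≤ n ∧ 2 ≤ b n + a (n + 1))
    (hpos : ∀ m, 0 ≤ m → 0 < q m ∧ 1 ≤ trunc a q m) (k : ℕ) :
    ∃ M, 0 ≤ M ∧ k < trunc a q M := by
  induction k with
  | zero => exact ⟨0, le_rfl, by push_cast; linarith [(hpos 0 le_rfl).2]⟩
  | succ k ih =>
    obtain ⟨M, hM₀, hkM⟩ := ih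
    obtain ⟨n, hMn, hn₁, hn₂⟩ := hba₂ (M + 1)
    obtain ⟨m, rfl⟩ : ∃ m, n = m + 1 := ⟨n - 1, by ring⟩
    have hTm := trunc_monotoneOn hq hba (fun m hm => (hpos m hm).1.le) hM₀
      (show 0 ≤ m by omega) (show M ≤ m by omega)
    have hqm := (hpos m (by omega)).1
    refine ⟨m + 1, by omega, ?_⟩
    rw [hq.trunc_succ_eq (by omega)]
    push_cast
    nlinarith

theorem abs_casoratian_eq_one (hp : SatisfiesRecurrence a b 1 p)
    (hq : SatisfiesRecurrence a b 1 q) (ha : ∀ n, 1 ≤ n → a n = 1 ∨ a n = -1)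
    (h : |casoratian p q (-1)| = 1) : ∀ n, -1 ≤ n → |casoratian p q n| = 1 := by
  intro n hn
  induction n, hn using Int.leInduction with
  | base => exact h
  | succ n hn ih =>
    have han : |a (n + 2)| = 1 := by rcases ha (n + 2) (by omega) with h | h <;> simp [h]
    rw [hp.casoratian_succ hq (by omega), abs_mul, abs_neg, han, ih, one_mul]

theorem abs_trunc_mul_sub_le (hp : SatisfiesRecurrence a b 1 p)
    (hq : SatisfiesRecurrence a b 1 q) (hb : ∀ n, 1 ≤ n → 1 ≤ b n)
    (hba : ∀ n, 1 ≤ n → 1 ≤ b n + a (n + 1)) (hn : 0 ≤ n) (hqn : 0 ≤ q n)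
    (hTn : 0 ≤ trunc a q n) (hcas : |casoratian p q n| = 1) :
    ∀ m, n + 1 ≤ m → |trunc a q n * (p m * q n - p n * q m)| ≤ q m := by
  set T := trunc a q n
  have hx : SatisfiesRecurrence a b (n + 1 + 1) (fun m => T * (p m * q n - p n * q m)) :=
    fun m hm => by
      simp only
      rw [hp m (by omega), hq m (by omega)]
      ring
  have hx₁ : |T * (p (n + 1) * q n - p n * q (n + 1))| = T := by
    rw [abs_mul, ← casoratian, hcas, abs_of_nonneg hTn, mul_one]
  have hxn : T * (p (n + 1 - 1) * q n - p n * q (n + 1 - 1)) = 0 := by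
    rw [add_sub_cancel_right]
    ring
  refine fun m hm => (hx.abs_le_of_abs_le (hq.mono (by omega)) hb hba (by omega) ?_ ?_ m hm).1
  · exact hx₁.trans_le (hq.trunc_le_succ hb (by omega) hn hqn)
  · rw [trunc, hxn, mul_zero, add_zero, hx₁]
    exact hq.trunc_le_trunc_succ hba (by omega) hn hqn

theorem abs_sub_div_le_of_tendsto (hp : SatisfiesRecurrence a b 1 p)
    (hq : SatisfiesRecurrence a b 1 q) (hb : ∀ n, 1 ≤ n → 1 ≤ b n)
    (hba : ∀ n, 1 ≤ n → 1 ≤ b n + a (n + 1))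
    (hpos : ∀ m, 0 ≤ m → 0 < q m ∧ 1 ≤ trunc a q m)
    (hcas : ∀ n, 0 ≤ n → |casoratian p q n| = 1) {α : ℝ}
    (hconv : Tendsto (fun n : ℕ => (p n / q n : ℝ)) atTop (𝓝 α)) (hn : 0 ≤ n) :
    |α - p n / q n| ≤ 1 / (q n * trunc a q n) := by
  refine le_of_tendsto (hconv.sub_const _).abs (eventually_atTop.2 ⟨(n + 1).toNat, ?_⟩)
  intro k hk
  refine abs_div_sub_div_le (hpos k (by omega)).1 (hpos n hn).1 (hpos n hn).2 ?_
  exact abs_trunc_mul_sub_le hp hq hb hba hn (hpos n hn).1.le (by linarith [(hpos n hn).2])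
    (hcas n hn) k (by omega)

end SemiregularContinuedFraction

open SemiregularContinuedFraction

theorem srcf_value_irrational_general (a b p q : ℤ → ℤ) (α : ℝ)
    (ha : ∀ n : ℤ, 1 ≤ n → a n = 1 ∨ a n = -1)
    (hb : ∀ n : ℤ, 1 ≤ n → 1 ≤ b n)
    (hba : ∀ n : ℤ, 1 ≤ n → 1 ≤ b n + a (n + 1))
    (hba2 : ∀ N : ℤ, ∃ n : ℤ, N ≤ n ∧ 1 ≤ n ∧ 2 ≤ b n + a (n + 1))
    (hpm1 : p (-1) = 1)
    (hp : ∀ n : ℤ, 1 ≤ n → p n = b n * p (n - 1) + a n * p (n - 2))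
    (hqm1 : q (-1) = 0) (hq0 : q 0 = 1)
    (hq : ∀ n : ℤ, 1 ≤ n → q n = b n * q (n - 1) + a n * q (n - 2))
    (hconv : Filter.Tendsto (fun n : ℕ => (p (n : ℤ) : ℝ) / (q (n : ℤ) : ℝ))
      Filter.atTop (nhds α)) :
    Irrational α := by
  have hpos := pos_and_one_le_trunc hq hb hba hq0 hqm1
  have hcas := abs_casoratian_eq_one hp hq ha (by simp [casoratian, hpm1, hq0, hqm1])
  have hmono := trunc_monotoneOn hq hba fun m hm => (hpos m hm).1.le
  rintro ⟨x, rfl⟩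
  obtain ⟨M, hM₀, hM⟩ := exists_lt_trunc hq hba hba2 hpos x.den
  have hrat : ∀ m, M ≤ m → (x : ℝ) * q m = p m := fun m hm => by
    have hTm : (x.den : ℝ) < trunc a q m := by
      exact_mod_cast hM.trans_le (hmono hM₀ (show 0 ≤ m by omega) hm)
    have hqm : (0 : ℝ) < q m := by exact_mod_cast (hpos m (by omega)).1
    refine x.cast_mul_eq_of_abs_sub_lt (hpos m (by omega)).1 ?_
    refine (abs_sub_div_le_of_tendsto hp hq hb hba hpos (fun n hn => hcas n (by omega)) hconv
      (by omega)).trans_lt ?_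
    rw [mul_comm (x.den : ℝ)]
    gcongr
  have hcasM : (casoratian p q M : ℝ) = 0 := by
    rw [casoratian]
    push_cast
    rw [← hrat M le_rfl, ← hrat (M + 1) (by omega)]
    ring
  simpa [show casoratian p q M = 0 by exact_mod_cast hcasM] using hcas M (by omega)

theorem srcf_value_irrational (a b p q : ℤ → ℤ) (α : ℝ)
    (ha : ∀ n : ℤ, 1 ≤ n → a n = 1 ∨ a n = -1)
    (hb : ∀ n : ℤ, 1 ≤ n → 1 ≤ b n)
    (hba : ∀ n : ℤ, 1 ≤ n → 1 ≤ b n + a (n + 1))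
    (hba2 : ∀ N : ℤ, ∃ n : ℤ, N ≤ n ∧ 1 ≤ n ∧ 2 ≤ b n + a (n + 1))
    (hpm1 : p (-1) = 1) (hp0 : p 0 = b 0)
    (hp : ∀ n : ℤ, 1 ≤ n → p n = b n * p (n - 1) + a n * p (n - 2))
    (hqm1 : q (-1) = 0) (hq0 : q 0 = 1)
    (hq : ∀ n : ℤ, 1 ≤ n → q n = b n * q (n - 1) + a n * q (n - 2))
    (hqinf : Filter.Tendsto (fun n : ℕ => q (n : ℤ)) Filter.atTop Filter.atTop)
    (hconv : Filter.Tendsto (fun n : ℕ => (p (n : ℤ) : ℝ) / (q (n : ℤ) : ℝ))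
      Filter.atTop (nhds α)) :
    Irrational α :=
  srcf_value_irrational_general a b p q α ha hb hba hba2 hpm1 hp hqm1 hq0 hq hconv
end

section
/- Let q_n be the semi-regular denominators and F_n the Fibonacci numbers (F_0=0, F_1=1). Then q_n ≤ F_{n+1} · b_1 b_2 ⋯ b_n for all n ≥ 0. -/
/-!
Since `|a n| ≤ 1` and `b n ≥ 1`, the recurrence gives `|q n| ≤ b n |q (n-1)| + |q (n-2)|`. With
`P n = b 1 ⋯ b n`, which is monotone, the bounds `|q (n-1)| ≤ F n P (n-1)` and
`|q (n-2)| ≤ F (n-1) P (n-2)` then give `|q n| ≤ (F n + F (n-1)) P n = F (n+1) P n`.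
-/

open Finset

lemma prod_Icc_one_add_one {M : Type*} [CommMonoid M] (b : ℤ → M) {n : ℤ} (hn : 0 ≤ n) :
    ∏ k ∈ Icc 1 (n + 1), b k = (∏ k ∈ Icc 1 n, b k) * b (n + 1) := by
  rw [← insert_Icc_right_eq_Icc_add_one (by omega), prod_insert (by simp), mul_comm]

section

variable {R : Type*} [CommRing R] [LinearOrder R] [IsStrictOrderedRing R]

lemma abs_mul_add_mul_le {c d x y : R} (hc : 0 ≤ c) (hd : |d| ≤ 1) :
    |c * x + d * y| ≤ c * |x| + |y| :=
  calc |c * x + d * y| ≤ |c| * |x| + |d| * |y| := by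
        simpa only [abs_mul] using abs_add_le (c * x) (d * y)
    _ ≤ c * |x| + |y| := by
        rw [abs_of_nonneg hc]
        gcongr
        exact mul_le_of_le_one_left (abs_nonneg y) hd

variable {b : ℤ → R} (hb : ∀ n, 1 ≤ n → 1 ≤ b n)
include hb

lemma one_le_prod_Icc_one (n : ℤ) : 1 ≤ ∏ k ∈ Icc 1 n, b k :=
  one_le_prod fun k hk => hb k (mem_Icc.mp hk).1

lemma prod_Icc_one_le_prod_Icc_one_add_one {n : ℤ} (hn : 0 ≤ n) :
    ∏ k ∈ Icc 1 n, b k ≤ ∏ k ∈ Icc 1 (n + 1), b k := by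
  rw [prod_Icc_one_add_one b hn]
  exact le_mul_of_one_le_right (zero_le_one.trans (one_le_prod_Icc_one hb n)) (hb _ (by omega))

theorem abs_le_fib_mul_prod_Icc_one {a q : ℤ → R} (ha : ∀ n, 1 ≤ n → |a n| ≤ 1)
    (hqm1 : q (-1) = 0) (hq0 : q 0 = 1)
    (hq : ∀ n, 1 ≤ n → q n = b n * q (n - 1) + a n * q (n - 2)) (n : ℕ) :
    |q n| ≤ Nat.fib (n + 1) * ∏ k ∈ Icc 1 (n : ℤ), b k := by
  induction n using Nat.twoStepInduction with
  | zero => simp [hq0]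
  | one => simp [hq 1 le_rfl, hq0, hqm1, abs_of_nonneg (zero_le_one.trans (hb 1 le_rfl))]
  | more n ih₀ ih₁ =>
    set P : ℤ → R := fun m => ∏ k ∈ Icc 1 m, b k
    push_cast at ih₁ ⊢
    have hbn : 0 ≤ b (n + 2) := zero_le_one.trans (hb _ (by omega))
    have hrec : |q (n + 2)| ≤ b (n + 2) * |q (n + 1)| + |q n| := by
      rw [hq _ (by omega), show (n + 2 - 1 : ℤ) = n + 1 by ring, show (n + 2 - 2 : ℤ) = n by ring]
      exact abs_mul_add_mul_le hbn (ha _ (by omega))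
    have hP : P n ≤ P (n + 2) :=
      (prod_Icc_one_le_prod_Icc_one_add_one hb (by omega)).trans
        (by simpa only [add_assoc, one_add_one_eq_two] using
          prod_Icc_one_le_prod_Icc_one_add_one hb (n := n + 1) (by omega))
    have hPsucc : P (n + 2) = P (n + 1) * b (n + 2) := by
      simpa only [add_assoc, one_add_one_eq_two] using prod_Icc_one_add_one b (n := n + 1) (by omega)
    have hfib : (Nat.fib (n + 2 + 1) : R) = Nat.fib (n + 2) + Nat.fib (n + 1) := by
      rw [Nat.fib_add_two, Nat.cast_add, add_comm]
    have hF : (0 : R) ≤ Nat.fib (n + 1) := Nat.cast_nonneg _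
    calc |q (n + 2)| ≤ b (n + 2) * |q (n + 1)| + |q n| := hrec
      _ ≤ b (n + 2) * (Nat.fib (n + 2) * P (n + 1)) + Nat.fib (n + 1) * P n := by
          gcongr
      _ ≤ Nat.fib (n + 2 + 1) * P (n + 2) := by
          rw [hfib, hPsucc]
          nlinarith [mul_le_mul_of_nonneg_left hP hF]

end

theorem srcf_denominator_upper_bound_general (a b q : ℤ → ℤ)
    (ha : ∀ n : ℤ, 1 ≤ n → a n = 1 ∨ a n = -1)
    (hb : ∀ n : ℤ, 1 ≤ n → 1 ≤ b n)
    (hqm1 : q (-1) = 0) (hq0 : q 0 = 1)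
    (hq : ∀ n : ℤ, 1 ≤ n → q n = b n * q (n - 1) + a n * q (n - 2)) :
    ∀ n : ℤ, 0 ≤ n →
      q n ≤ (Nat.fib (n + 1).toNat : ℤ) * ∏ k ∈ Finset.Icc (1 : ℤ) n, b k := by
  intro n hn
  lift n to ℕ using hn
  have ha' : ∀ n, 1 ≤ n → |a n| ≤ 1 := fun n hn => by rcases ha n hn with h | h <;> simp [h]
  rw [show ((n : ℤ) + 1).toNat = n + 1 by omega]
  exact (le_abs_self _).trans (abs_le_fib_mul_prod_Icc_one hb ha' hqm1 hq0 hq n)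

theorem srcf_denominator_upper_bound (a b q : ℤ → ℤ)
    (ha : ∀ n : ℤ, 1 ≤ n → a n = 1 ∨ a n = -1)
    (hb : ∀ n : ℤ, 1 ≤ n → 1 ≤ b n)
    (hba : ∀ n : ℤ, 1 ≤ n → 1 ≤ b n + a (n + 1))
    (hqm1 : q (-1) = 0) (hq0 : q 0 = 1)
    (hq : ∀ n : ℤ, 1 ≤ n → q n = b n * q (n - 1) + a n * q (n - 2)) :
    ∀ n : ℤ, 0 ≤ n →
      q n ≤ (Nat.fib (n + 1).toNat : ℤ) * ∏ k ∈ Finset.Icc (1 : ℤ) n, b k :=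
  srcf_denominator_upper_bound_general a b q ha hb hqm1 hq0 hq
end

section
/- Suppose q_n are the semi-regular denominators satisfying condition (C): b_n + a_n ≥ 2 for all large n. Then for all large n, q_{n+1} ≥ (1/2) b_{n+1} q_n. -/
/-!
By induction, every pair of consecutive denominators satisfies `0 ≤ q (n-1)`, `1 ≤ q n`, and
`q (n-1) < q n` whenever the next numerator `a (n+1)` is `-1`. Under (C), `a (n+1) = -1` forces
`b (n+1) ≥ 3`, so `q (n+1) = b (n+1) q n - q (n-1) > (b (n+1) - 1) q n ≥ b (n+1) q n / 2`;
when `a (n+1) = 1` the bound `q (n+1) ≥ b (n+1) q n` is immediate.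
-/

/-- The invariant of consecutive denominators `x = q (n-1)`, `y = q n`, with `a = a (n+1)`. -/
def SemiRegularPair (x y a : ℤ) : Prop :=
  0 ≤ x ∧ 1 ≤ y ∧ (a = -1 → x < y)

namespace SemiRegularPair

variable {x y a a' b : ℤ}

theorem next (h : SemiRegularPair x y a) (ha : a = 1 ∨ a = -1) (hb : 1 ≤ b)
    (hba : 1 ≤ b + a') : SemiRegularPair y (b * y + a * x) a' := by
  obtain ⟨hx, hy, hlt⟩ := h
  have hby : y ≤ b * y := le_mul_of_one_le_left (by omega) hb
  refine ⟨by omega, ?_, fun ha' => ?_⟩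
  · rcases ha with rfl | rfl
    · nlinarith
    · have := hlt rfl; nlinarith
  · have hb2 : 2 ≤ b := by omega
    have h2y : 2 * y ≤ b * y := mul_le_mul_of_nonneg_right hb2 (by omega)
    rcases ha with rfl | rfl
    · nlinarith
    · have := hlt rfl; nlinarith

theorem mul_le_two_mul_next (h : SemiRegularPair x y a) (ha : a = 1 ∨ a = -1)
    (hC : 2 ≤ b + a) : b * y ≤ 2 * (b * y + a * x) := by
  obtain ⟨hx, hy, hlt⟩ := h
  rcases ha with rfl | rfl
  · nlinarith
  · have := hlt rfl
    have h3y : 3 * y ≤ b * y := mul_le_mul_of_nonneg_right (by omega) (by omega)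
    nlinarith

end SemiRegularPair

section Denominators

variable {a b q : ℤ → ℤ}

theorem denom_succ (hq : ∀ n : ℤ, 1 ≤ n → q n = b n * q (n - 1) + a n * q (n - 2))
    {n : ℤ} (hn : 0 ≤ n) : q (n + 1) = b (n + 1) * q n + a (n + 1) * q (n - 1) := by
  simpa only [add_sub_cancel_right, show n + 1 - 2 = n - 1 by ring] using hq (n + 1) (by omega)

theorem semiRegularPair_denom (ha : ∀ n : ℤ, 1 ≤ n → a n = 1 ∨ a n = -1)
    (hb : ∀ n : ℤ, 1 ≤ n → 1 ≤ b n) (hba : ∀ n : ℤ, 1 ≤ n → 1 ≤ b n + a (n + 1))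
    (hqm1 : q (-1) = 0) (hq0 : q 0 = 1)
    (hq : ∀ n : ℤ, 1 ≤ n → q n = b n * q (n - 1) + a n * q (n - 2)) {n : ℤ} (hn : 0 ≤ n) :
    SemiRegularPair (q (n - 1)) (q n) (a (n + 1)) := by
  induction n, hn using Int.leInduction with
  | base => simp [SemiRegularPair, hqm1, hq0]
  | succ n hn ih =>
    rw [add_sub_cancel_right, denom_succ hq hn]
    exact ih.next (ha _ (by omega)) (hb _ (by omega)) (hba _ (by omega))

end Denominators

theorem srcf_condition_C_growth (a b q : ℤ → ℤ) (N : ℤ)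
    (ha : ∀ n : ℤ, 1 ≤ n → a n = 1 ∨ a n = -1)
    (hb : ∀ n : ℤ, 1 ≤ n → 1 ≤ b n)
    (hba : ∀ n : ℤ, 1 ≤ n → 1 ≤ b n + a (n + 1))
    (hqm1 : q (-1) = 0) (hq0 : q 0 = 1)
    (hq : ∀ n : ℤ, 1 ≤ n → q n = b n * q (n - 1) + a n * q (n - 2))
    (hC : ∀ n : ℤ, N ≤ n → 2 ≤ b n + a n) :
    ∃ M : ℤ, ∀ n : ℤ, M ≤ n →
      (1 / 2 : ℝ) * (b (n + 1) : ℝ) * (q n : ℝ) ≤ (q (n + 1) : ℝ) := by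
  refine ⟨max N 0, fun n hn => ?_⟩
  have hn0 : 0 ≤ n := le_of_max_le_right hn
  have hint : b (n + 1) * q n ≤ 2 * q (n + 1) := by
    rw [denom_succ hq hn0]
    exact (semiRegularPair_denom ha hb hba hqm1 hq0 hq hn0).mul_le_two_mul_next
      (ha _ (by omega)) (hC _ (by omega))
  have hreal : (b (n + 1) : ℝ) * q n ≤ 2 * q (n + 1) := by exact_mod_cast hint
  linarith
end
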